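/- arXiv:math/0210306 — 4 statements merged into one kernel-verified Lean document; each statement's English description precedes it below -/
import Mathlib

section
/- Let f be a holomorphic map from the open unit disc D into itself whose image f(D) is contained in a compact subset K of D. Then there exists λ < 1 (depending only on K) such that for all x, y in D, the hyperbolic distance between f(x) and f(y) is at most λ times the hyperbolic distance between x and y. -/
/-!
The Möbius map `toDiscAt x z = (z - x) / (z - conj x)` sends `ℍ` onto the unit disc and `x` to
`0`, with `‖toDiscAt x z‖ = tanh (d(z, x) / 2)`. Conjugating `f` by such maps at `x` and at `f x`
gives a self-map of the disc fixing `0` whose image lies in the closed disc of radius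
`λ = tanh (diam K / 2) < 1`, since `f(ℍ)` lies in the hyperbolic ball of radius `diam K` about `f x`.
The Schwarz lemma then gives `tanh (d(f x, f y) / 2) ≤ λ tanh (d(x, y) / 2)`, and concavity of
`tanh` on `[0, ∞)`, in the form `λ tanh t ≤ tanh (λ t)`, yields `d(f x, f y) ≤ λ d(x, y)`.
-/

open Real Set Metric UpperHalfPlane

namespace Real

theorem strictMono_tanh : StrictMono tanh := fun a b hab =>
  lt_of_not_ge fun h => hab.not_ge <| by
    simpa only [artanh_tanh] using artanh_le_artanh (neg_one_lt_tanh b) (tanh_lt_one a) h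

theorem tanh_nonneg {x : ℝ} (hx : 0 ≤ x) : 0 ≤ tanh x := by
  simpa using strictMono_tanh.monotone hx

theorem hasDerivAt_tanh (x : ℝ) : HasDerivAt tanh (cosh x ^ 2)⁻¹ x := by
  have h := (hasDerivAt_sinh x).div (hasDerivAt_cosh x) (cosh_pos x).ne'
  rwa [show sinh / cosh = tanh from funext fun y => (tanh_eq_sinh_div_cosh y).symm, ← sq, ← sq,
    cosh_sq_sub_sinh_sq, one_div] at h

theorem concaveOn_tanh : ConcaveOn ℝ (Ici 0) tanh := by
  have hderiv : deriv tanh = fun x => (cosh x ^ 2)⁻¹ := funext fun x => (hasDerivAt_tanh x).deriv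
  have hdiff : Differentiable ℝ tanh := fun x => (hasDerivAt_tanh x).differentiableAt
  refine AntitoneOn.concaveOn_of_deriv (convex_Ici 0) hdiff.continuous.continuousOn
    hdiff.differentiableOn ?_
  rw [interior_Ici, hderiv]
  intro a ha b hb hab
  have : cosh a ≤ cosh b := cosh_le_cosh.2 (by rwa [abs_of_pos ha, abs_of_pos hb])
  dsimp only
  gcongr

theorem mul_tanh_le_tanh_mul {l t : ℝ} (hl₀ : 0 ≤ l) (hl₁ : l ≤ 1) (ht : 0 ≤ t) :
    l * tanh t ≤ tanh (l * t) := by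
  simpa using concaveOn_tanh.2 ht self_mem_Ici hl₀ (sub_nonneg.2 hl₁) (add_sub_cancel l 1)

end Real

namespace UpperHalfPlane

open ComplexConjugate

noncomputable def toDiscAt (x : ℍ) (z : ℂ) : ℂ := (z - x) / (z - conj (x : ℂ))

noncomputable def ofDiscAt (x : ℍ) (w : ℂ) : ℂ := (x - conj (x : ℂ) * w) / (1 - w)

theorem coe_sub_conj_ne_zero (z x : ℍ) : (z : ℂ) - conj (x : ℂ) ≠ 0 := by
  refine fun h => (add_pos z.im_pos x.im_pos).ne' ?_
  simpa using congr_arg Complex.im h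

theorem toDiscAt_self (x : ℍ) : toDiscAt x x = 0 := by
  simp [toDiscAt]

theorem norm_toDiscAt (x z : ℍ) : ‖toDiscAt x z‖ = tanh (dist z x / 2) := by
  rw [tanh_half_dist, toDiscAt, norm_div, Complex.dist_eq, Complex.dist_eq]

theorem differentiableOn_toDiscAt (x : ℍ) :
    DifferentiableOn ℂ (toDiscAt x) {z : ℂ | 0 < z.im} :=
  (differentiableOn_id.sub_const _).div (differentiableOn_id.sub_const _) fun z hz =>
    coe_sub_conj_ne_zero ⟨z, hz⟩ x

theorem ofDiscAt_zero (x : ℍ) : ofDiscAt x 0 = x := by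
  simp [ofDiscAt]

theorem ofDiscAt_toDiscAt (x y : ℍ) : ofDiscAt x (toDiscAt x y) = y := by
  have hy := coe_sub_conj_ne_zero y x
  have hx := coe_sub_conj_ne_zero x x
  have h_one_sub : 1 - toDiscAt x y = ((x : ℂ) - conj (x : ℂ)) / ((y : ℂ) - conj (x : ℂ)) := by
    rw [toDiscAt]
    field_simp
    ring
  rw [ofDiscAt, h_one_sub, toDiscAt]
  field_simp
  ring

theorem im_ofDiscAt (x : ℍ) (w : ℂ) :
    (ofDiscAt x w).im = x.im * (1 - ‖w‖ ^ 2) / Complex.normSq (1 - w) := by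
  rw [ofDiscAt, Complex.div_im, Complex.sq_norm, Complex.normSq_apply w]
  simp only [Complex.sub_im, Complex.sub_re, Complex.mul_im, Complex.mul_re,
    Complex.conj_re, Complex.conj_im, Complex.one_im, Complex.one_re, coe_im, coe_re]
  ring

theorem im_ofDiscAt_pos (x : ℍ) {w : ℂ} (hw : w ∈ ball (0 : ℂ) 1) : 0 < (ofDiscAt x w).im := by
  rw [mem_ball_zero_iff] at hw
  have hw' : 1 - w ≠ 0 := sub_ne_zero.2 fun h => by simp [← h] at hw
  rw [im_ofDiscAt]
  have : ‖w‖ ^ 2 < 1 := by nlinarith [norm_nonneg w]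
  exact div_pos (mul_pos x.im_pos (by linarith)) (Complex.normSq_pos.2 hw')

theorem differentiableOn_ofDiscAt (x : ℍ) : DifferentiableOn ℂ (ofDiscAt x) (ball 0 1) :=
  ((differentiableOn_id.const_mul _).const_sub _).div (differentiableOn_id.const_sub _)
    fun w hw => sub_ne_zero.2 fun h => by simp [← h] at hw

theorem tanh_half_dist_le_of_mapsTo_closedBall {f : ℂ → ℂ}
    (hf : DifferentiableOn ℂ f {z : ℂ | 0 < z.im}) {x fx : ℍ} (hfx : (fx : ℂ) = f x) {R : ℝ}
    (hR : ∀ z : ℍ, f z ∈ ((↑) : ℍ → ℂ) '' closedBall fx R) {y fy : ℍ} (hfy : (fy : ℂ) = f y) :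
    tanh (dist fy fx / 2) ≤ tanh (R / 2) * tanh (dist y x / 2) := by
  set g := toDiscAt fx ∘ f ∘ ofDiscAt x
  have hf_maps : MapsTo f {z : ℂ | 0 < z.im} {z : ℂ | 0 < z.im} := fun z hz => by
    obtain ⟨w, -, hw⟩ := hR ⟨z, hz⟩
    exact hw ▸ w.im_pos
  have hg : DifferentiableOn ℂ g (ball 0 1) :=
    ((differentiableOn_toDiscAt fx).comp hf hf_maps).comp (differentiableOn_ofDiscAt x)
      fun w hw => im_ofDiscAt_pos x hw
  have hg_zero : g 0 = 0 := by
    simp only [g, Function.comp_apply, ofDiscAt_zero, ← hfx, toDiscAt_self]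
  have hg_maps : MapsTo g (ball 0 1) (closedBall (g 0) (tanh (R / 2))) := fun w hw => by
    obtain ⟨v, hv, hfv⟩ := hR ⟨ofDiscAt x w, im_ofDiscAt_pos x hw⟩
    rw [hg_zero, mem_closedBall_zero_iff]
    simp only [g, Function.comp_apply]
    rw [← hfv, norm_toDiscAt]
    exact strictMono_tanh.monotone (by linarith [mem_closedBall.1 hv])
  have hy : toDiscAt x y ∈ ball 0 1 := by
    rw [mem_ball_zero_iff, norm_toDiscAt]
    exact tanh_lt_one _
  have hgy : g (toDiscAt x y) = toDiscAt fx fy := by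
    simp only [g, Function.comp_apply, ofDiscAt_toDiscAt, ← hfy]
  have := Complex.dist_le_div_mul_dist_of_mapsTo_ball hg hg_maps hy
  rwa [hgy, hg_zero, dist_zero_right, dist_zero_right, norm_toDiscAt, norm_toDiscAt, div_one]
    at this

end UpperHalfPlane

/-- A holomorphic self-map of the hyperbolic plane whose image lies in a compact
subset `K` is a uniform contraction (with factor depending only on `K`) for the
hyperbolic metric. -/
theorem stmt_0 (K : Set ℂ) (hK : IsCompact K) (hKsub : K ⊆ {z : ℂ | 0 < z.im}) :
    ∃ l : ℝ, l < 1 ∧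
      ∀ f : ℂ → ℂ, DifferentiableOn ℂ f {z : ℂ | 0 < z.im} →
        (∀ z : UpperHalfPlane, f (z : ℂ) ∈ K) →
        ∀ (x y fx fy : UpperHalfPlane),
          (fx : ℂ) = f (x : ℂ) → (fy : ℂ) = f (y : ℂ) →
          dist fx fy ≤ l * dist x y := by
  set K' : Set ℍ := (↑) ⁻¹' K
  have hK' : IsCompact K' := by
    rwa [isEmbedding_coe.isCompact_iff, image_preimage_eq_of_subset (by rwa [range_coe])]
  refine ⟨tanh (diam K' / 2), tanh_lt_one _, fun f hf hfK x y fx fy hfx hfy => ?_⟩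
  have hl : 0 ≤ tanh (diam K' / 2) := tanh_nonneg (by positivity)
  have hfx_mem : fx ∈ K' := show (fx : ℂ) ∈ K from hfx ▸ hfK x
  have hf_ball : ∀ z : ℍ, f z ∈ ((↑) : ℍ → ℂ) '' closedBall fx (diam K') := fun z =>
    ⟨⟨f z, hKsub (hfK z)⟩, dist_le_diam_of_mem hK'.isBounded (hfK z) hfx_mem, rfl⟩
  have h_tanh : tanh (dist fy fx / 2) ≤ tanh (tanh (diam K' / 2) * (dist y x / 2)) :=
    (tanh_half_dist_le_of_mapsTo_closedBall hf hfx hf_ball hfy).trans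
      (mul_tanh_le_tanh_mul hl (tanh_lt_one _).le (by positivity))
  rw [strictMono_tanh.le_iff_le, dist_comm fy, dist_comm y] at h_tanh
  linarith
end

section
/- Let a ∈ ℂ and let F be holomorphic in a neighborhood of 0 with F(0) = 0 and F'(0) = ρ where 0 < |ρ| < 1. Suppose that the map w ↦ F(conj(w)) satisfies (F ∘ conj) ∘ (F ∘ conj)(w) = |ρ|² · w for all w near 0. Then F(w) = ρ·w for all w near 0. -/
open Complex

/-- If `F` is holomorphic near `0`, `F 0 = 0`, `F' 0 = ρ` with `0 < |ρ| < 1`, and the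
second iterate of the antiholomorphic germ `w ↦ F (conj w)` is exactly `w ↦ |ρ|² w`
near `0`, then `F w = ρ w` near `0`. -/
theorem stmt_2 (F : ℂ → ℂ) (ρ : ℂ) (hF : AnalyticAt ℂ F 0) (h0 : F 0 = 0)
    (hd : deriv F 0 = ρ) (hρ0 : 0 < ‖ρ‖) (hρ1 : ‖ρ‖ < 1)
    (hiter : ∀ᶠ w in nhds (0 : ℂ),
      F ((starRingEnd ℂ) (F ((starRingEnd ℂ) w))) = ((‖ρ‖ : ℂ)) ^ 2 * w) :
    ∀ᶠ w in nhds (0 : ℂ), F w = ρ * w := by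
  set l : ℂ := ((‖ρ‖ : ℂ)) ^ 2 with hl
  have hl0 : l ≠ 0 := by
    exact pow_ne_zero 2 (Complex.ofReal_ne_zero.mpr (ne_of_gt hρ0))
  have hlabs : ‖l‖ < 1 := by
    have : ‖l‖ = (‖ρ‖) ^ 2 := by
      simp [hl, norm_pow, Complex.norm_real, abs_of_pos hρ0]
    rw [this]
    nlinarith
  have hconjl : (starRingEnd ℂ) l = l := by
    simp [hl, map_pow, Complex.conj_ofReal]
  have hconj : Filter.Tendsto (starRingEnd ℂ) (nhds (0:ℂ)) (nhds (0:ℂ)) := by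
    simpa using (Complex.continuous_conj.tendsto (0:ℂ))
  have h2 : ∀ᶠ w in nhds (0:ℂ),
      F ((starRingEnd ℂ) (F w)) = l * (starRingEnd ℂ) w := by
    filter_upwards [hconj.eventually hiter] with w hw
    simpa using hw
  have hFcont : Filter.Tendsto F (nhds (0:ℂ)) (nhds (0:ℂ)) := by
    have := hF.continuousAt
    rwa [ContinuousAt, h0] at this
  have h4 : ∀ᶠ w in nhds (0:ℂ), F (l * w) = l * F w := by
    filter_upwards [hFcont.eventually hiter, h2] with w h1 h2'
    -- h1 : F (conj (F (conj (F w)))) = l * F w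
    -- h2' : F (conj (F w)) = l * conj w
    rw [← h1]
    congr 1
    rw [h2']
    simp [map_mul, hconjl]
  rw [Metric.eventually_nhds_iff] at h4
  obtain ⟨r, hr, hball⟩ := h4
  have hiterate : ∀ w : ℂ, dist w (0:ℂ) < r → ∀ n : ℕ, F (l ^ n * w) = l ^ n * F w := by
    intro w hw n
    induction n with
    | zero => simp
    | succ n ih =>
      have hwn : dist (l ^ n * w) (0:ℂ) < r := by
        simp only [dist_zero_right] at hw ⊢
        calc ‖l ^ n * w‖ = ‖l‖ ^ n * ‖w‖ := by simp [norm_mul, norm_pow]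
          _ ≤ 1 * ‖w‖ := by
              apply mul_le_mul_of_nonneg_right _ (norm_nonneg _)
              exact pow_le_one₀ (norm_nonneg _) (le_of_lt hlabs)
          _ < r := by simpa using hw
      have := hball hwn
      calc F (l ^ (n+1) * w) = F (l * (l ^ n * w)) := by ring_nf
        _ = l * F (l ^ n * w) := hball hwn
        _ = l ^ (n+1) * F w := by rw [ih]; ring
  have hslope : Filter.Tendsto (fun z : ℂ => F z / z) (nhdsWithin 0 {(0:ℂ)}ᶜ) (nhds ρ) := by
    have hder : HasDerivAt F ρ 0 := by
      have := hF.differentiableAt.hasDerivAt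
      rwa [hd] at this
    have := hasDerivAt_iff_tendsto_slope.mp hder
    refine this.congr' ?_
    filter_upwards [self_mem_nhdsWithin] with z hz
    simp [slope_def_field, h0]
  rw [Metric.eventually_nhds_iff]
  refine ⟨r, hr, fun w hw => ?_⟩
  by_cases hw0 : w = 0
  · simp [hw0, h0]
  · have hz : ∀ n : ℕ, l ^ n * w ≠ 0 := fun n => mul_ne_zero (pow_ne_zero n hl0) hw0
    have htend0 : Filter.Tendsto (fun n : ℕ => l ^ n * w) Filter.atTop (nhds 0) := by
      have := tendsto_pow_atTop_nhds_zero_of_norm_lt_one (x := l) (by simpa using hlabs)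
      simpa using this.mul_const w
    have htend : Filter.Tendsto (fun n : ℕ => l ^ n * w) Filter.atTop
        (nhdsWithin 0 {(0:ℂ)}ᶜ) := by
      apply tendsto_nhdsWithin_of_tendsto_nhds_of_eventually_within _ htend0
      exact Filter.Eventually.of_forall fun n => hz n
    have hcomp : Filter.Tendsto (fun n : ℕ => F (l ^ n * w) / (l ^ n * w))
        Filter.atTop (nhds ρ) := hslope.comp htend
    have hconst : (fun n : ℕ => F (l ^ n * w) / (l ^ n * w)) = fun _ => F w / w := by
      funext n
      rw [hiterate w hw n, mul_div_mul_left _ _ (pow_ne_zero n hl0)]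
    rw [hconst] at hcomp
    have := tendsto_nhds_unique hcomp tendsto_const_nhds
    field_simp at this
    exact this.symm
end

section
/- Let U ⊆ ℂ be open, a ∈ U, and let f be holomorphic and injective on U* = {conj(z) : z ∈ U} with f(U*) ⊆ U. Define the antiholomorphic map f*(z) = f(conj(z)). Assume f*(a) = a and 0 < |ρ| < 1 where ρ = f'(conj(a)). Then there exists a holomorphic injective map K defined near a with K(a) = 0 such that K(f*(z)) = ρ · conj(K(z)) for all z near a. -/
/-!
Write `F z = f (conj z)`. Then `F ∘ F` is holomorphic near `a`, fixes `a`, and has multiplier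
`ρ * conj ρ = ‖ρ‖²` there, so Koenigs' theorem gives a coordinate `φ` with `φ ∘ F ∘ F = ‖ρ‖² • φ`,
namely the locally uniform limit of `((F ∘ F)^[n] - a) / ‖ρ‖^(2n)`. The antilinear map
`w ↦ ρ * conj w` squares to multiplication by `‖ρ‖²`, so the average
`K = ‖ρ‖² φ + ρ * conj (φ ∘ F)` satisfies `K ∘ F = ρ * conj K`; it is holomorphic with
`K' a = 2 ‖ρ‖² ≠ 0`, hence injective near `a`.
-/

open Complex ComplexConjugate Metric Set Filter Topology Asymptotics

theorem AnalyticAt.isBigO_sub_sub_deriv_mul_sub_sq {g : ℂ → ℂ} {a : ℂ} (hg : AnalyticAt ℂ g a) :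
    (fun z => g z - g a - deriv g a * (z - a)) =O[𝓝 a] fun z => (z - a) ^ 2 := by
  set e : ℂ → ℂ := fun z => g z - g a - deriv g a * (z - a)
  have he : HasDerivAt e 0 a :=
    ((hg.differentiableAt.hasDerivAt.sub_const (g a)).fun_sub
      (((hasDerivAt_id' a).sub_const a).const_mul (deriv g a))).congr_deriv (by ring)
  have hs : {z | DifferentiableAt ℂ e z} ∈ 𝓝 a := by
    have : AnalyticAt ℂ e a := by fun_prop
    exact analyticAt_iff_eventually_differentiableAt.1 this
  have hslope : DifferentiableAt ℂ (dslope e a) a :=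
    ((differentiableOn_dslope hs).2 fun z hz => hz.differentiableWithinAt).differentiableAt hs
  have hslope_a : dslope e a a = 0 := by rw [dslope_same, he.deriv]
  have hfactor : ∀ z, e z = (z - a) * dslope e a z := fun z => by
    rw [← smul_eq_mul, sub_smul_dslope]; simp [e]
  calc e =ᶠ[𝓝 a] fun z => (z - a) * (dslope e a z - dslope e a a) :=
        Eventually.of_forall fun z => by simp only [hslope_a, sub_zero, hfactor z]
    _ =O[𝓝 a] fun z => (z - a) * (z - a) := (isBigO_refl _ _).mul hslope.isBigO_sub
    _ = fun z => (z - a) ^ 2 := by simp only [sq]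

theorem tendstoUniformlyOn_of_norm_sub_succ_le {α E : Type*} [NormedAddCommGroup E]
    [CompleteSpace E] {F : ℕ → α → E} {s : Set α} {u : ℕ → ℝ} (hu : Summable u)
    (hF : ∀ n, ∀ x ∈ s, ‖F (n + 1) x - F n x‖ ≤ u n) :
    TendstoUniformlyOn F (fun x => F 0 x + ∑' n, (F (n + 1) x - F n x)) atTop s := by
  have hconst : TendstoUniformlyOn (fun _ : ℕ => F 0) (F 0) atTop s := fun _ hu =>
    Eventually.of_forall fun _ _ _ => refl_mem_uniformity hu
  refine (hconst.add (tendstoUniformlyOn_tsum_nat hu hF)).congr ?_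
  filter_upwards with N x _
  simp only [Pi.add_apply, Finset.sum_range_sub (fun n => F n x) N, add_sub_cancel]

section Koenigs

variable {g : ℂ → ℂ} {a l : ℂ} {r c C : ℝ}

noncomputable def koenigsApprox (g : ℂ → ℂ) (a l : ℂ) (n : ℕ) (z : ℂ) : ℂ :=
  (g^[n] z - a) / l ^ n

theorem koenigsApprox_apply_self (hga : g a = a) (n : ℕ) : koenigsApprox g a l n a = 0 := by
  simp [koenigsApprox, Function.iterate_fixed hga]

theorem koenigsApprox_comp (hl : l ≠ 0) (n : ℕ) (z : ℂ) :
    koenigsApprox g a l n (g z) = l * koenigsApprox g a l (n + 1) z := by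
  rw [koenigsApprox, koenigsApprox, Function.iterate_succ_apply, pow_succ']
  field_simp

theorem koenigsApprox_succ_sub (hl : l ≠ 0) (n : ℕ) (z : ℂ) :
    koenigsApprox g a l (n + 1) z - koenigsApprox g a l n z =
      (g (g^[n] z) - a - l * (g^[n] z - a)) / l ^ (n + 1) := by
  rw [koenigsApprox, koenigsApprox, Function.iterate_succ_apply', pow_succ]
  field_simp

theorem hasDerivAt_koenigsApprox (hga : g a = a) (hg : HasDerivAt g l a) (hl : l ≠ 0) (n : ℕ) :
    HasDerivAt (koenigsApprox g a l n) 1 a :=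
  ((HasDerivAt.iterate a hg hga n).sub_const a).div_const _
    |>.congr_deriv (div_self (pow_ne_zero n hl))

theorem norm_sub_le_of_norm_sub_sub_le
    (he : ∀ z ∈ ball a r, ‖g z - a - l * (z - a)‖ ≤ C * ‖z - a‖ ^ 2) (hC : 0 ≤ C)
    (hc : ‖l‖ + C * r ≤ c) {z : ℂ} (hz : z ∈ ball a r) : ‖g z - a‖ ≤ c * ‖z - a‖ := by
  have hzr : ‖z - a‖ < r := by rwa [mem_ball, dist_eq] at hz
  calc ‖g z - a‖ ≤ ‖l * (z - a)‖ + ‖g z - a - l * (z - a)‖ := norm_le_insert' _ _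
    _ ≤ ‖l‖ * ‖z - a‖ + C * ‖z - a‖ * ‖z - a‖ := by
        rw [norm_mul, mul_assoc, ← sq]; gcongr; exact he z hz
    _ ≤ (‖l‖ + C * r) * ‖z - a‖ := by rw [add_mul]; gcongr
    _ ≤ c * ‖z - a‖ := by gcongr

theorem mapsTo_ball_of_norm_sub_le (hg : ∀ z ∈ ball a r, ‖g z - a‖ ≤ c * ‖z - a‖)
    (hc : c ≤ 1) : MapsTo g (ball a r) (ball a r) := fun z hz => by
  rw [mem_ball, dist_eq] at hz ⊢
  calc ‖g z - a‖ ≤ c * ‖z - a‖ := hg z (by rwa [mem_ball, dist_eq])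
    _ ≤ 1 * ‖z - a‖ := by gcongr
    _ < r := by rwa [one_mul]

theorem norm_iterate_sub_le (hg : ∀ z ∈ ball a r, ‖g z - a‖ ≤ c * ‖z - a‖) (hc0 : 0 ≤ c)
    (hc1 : c ≤ 1) (n : ℕ) {z : ℂ} (hz : z ∈ ball a r) : ‖g^[n] z - a‖ ≤ c ^ n * ‖z - a‖ := by
  induction n with
  | zero => simp
  | succ n ih =>
    rw [Function.iterate_succ_apply', pow_succ', mul_assoc]
    exact (hg _ ((mapsTo_ball_of_norm_sub_le hg hc1).iterate n hz)).trans (by gcongr)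

theorem norm_koenigsApprox_succ_sub_le
    (he : ∀ z ∈ ball a r, ‖g z - a - l * (z - a)‖ ≤ C * ‖z - a‖ ^ 2)
    (hg : ∀ z ∈ ball a r, ‖g z - a‖ ≤ c * ‖z - a‖) (hC : 0 ≤ C) (hc0 : 0 ≤ c) (hc1 : c ≤ 1)
    (hl : l ≠ 0) (n : ℕ) {z : ℂ} (hz : z ∈ ball a r) :
    ‖koenigsApprox g a l (n + 1) z - koenigsApprox g a l n z‖ ≤
      C * r ^ 2 / ‖l‖ * (c ^ 2 / ‖l‖) ^ n := by
  have hzr : ‖z - a‖ ≤ r := by rw [mem_ball, dist_eq] at hz; exact hz.le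
  have hl' : 0 < ‖l‖ := norm_pos_iff.2 hl
  rw [koenigsApprox_succ_sub hl, norm_div, norm_pow, div_le_iff₀ (by positivity)]
  calc ‖g (g^[n] z) - a - l * (g^[n] z - a)‖
      ≤ C * ‖g^[n] z - a‖ ^ 2 := he _ ((mapsTo_ball_of_norm_sub_le hg hc1).iterate n hz)
    _ ≤ C * (c ^ n * r) ^ 2 := by
        gcongr; exact (norm_iterate_sub_le hg hc0 hc1 n hz).trans (by gcongr)
    _ = C * r ^ 2 / ‖l‖ * (c ^ 2 / ‖l‖) ^ n * ‖l‖ ^ (n + 1) := by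
        rw [div_pow, pow_succ]; field_simp; ring

theorem exists_tendstoUniformlyOn_koenigsApprox
    (he : ∀ z ∈ ball a r, ‖g z - a - l * (z - a)‖ ≤ C * ‖z - a‖ ^ 2)
    (hg : ∀ z ∈ ball a r, ‖g z - a‖ ≤ c * ‖z - a‖) (hC : 0 ≤ C) (hc0 : 0 ≤ c) (hc1 : c ≤ 1)
    (hcl : c ^ 2 < ‖l‖) :
    ∃ φ : ℂ → ℂ, TendstoUniformlyOn (koenigsApprox g a l) φ atTop (ball a r) := by
  have hl : 0 < ‖l‖ := (sq_nonneg c).trans_lt hcl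
  have hsum : Summable fun n : ℕ => C * r ^ 2 / ‖l‖ * (c ^ 2 / ‖l‖) ^ n :=
    (summable_geometric_of_lt_one (by positivity) ((div_lt_one hl).2 hcl)).mul_left _
  exact ⟨_, tendstoUniformlyOn_of_norm_sub_succ_le hsum fun n z hz =>
    norm_koenigsApprox_succ_sub_le he hg hC hc0 hc1 (norm_pos_iff.1 hl) n hz⟩

theorem exists_koenigs_on_ball (hgd : DifferentiableOn ℂ g (ball a r)) (hga : g a = a)
    (hgl : HasDerivAt g l a) (hr : 0 < r)
    (he : ∀ z ∈ ball a r, ‖g z - a - l * (z - a)‖ ≤ C * ‖z - a‖ ^ 2) (hC : 0 ≤ C)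
    (hc : ‖l‖ + C * r ≤ c) (hc1 : c ≤ 1) (hcl : c ^ 2 < ‖l‖) :
    ∃ φ : ℂ → ℂ, DifferentiableOn ℂ φ (ball a r) ∧ φ a = 0 ∧ deriv φ a = 1 ∧
      ∀ z ∈ ball a r, φ (g z) = l * φ z := by
  have hl : l ≠ 0 := norm_pos_iff.1 ((sq_nonneg c).trans_lt hcl)
  have hc0 : 0 ≤ c := le_trans (by positivity) hc
  have hcontr : ∀ z ∈ ball a r, ‖g z - a‖ ≤ c * ‖z - a‖ := fun z hz =>
    norm_sub_le_of_norm_sub_sub_le he hC hc hz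
  have hmaps := mapsTo_ball_of_norm_sub_le hcontr hc1
  have hdiff : ∀ n, DifferentiableOn ℂ (koenigsApprox g a l n) (ball a r) := fun n =>
    (((hgd.iterate hmaps n)).sub_const a).div_const _
  obtain ⟨φ, hφ⟩ := exists_tendstoUniformlyOn_koenigsApprox he hcontr hC hc0 hc1 hcl
  have hloc := hφ.tendstoLocallyUniformlyOn
  have ha : a ∈ ball a r := mem_ball_self hr
  refine ⟨φ, hloc.differentiableOn (Eventually.of_forall hdiff) isOpen_ball, ?_, ?_, ?_⟩
  · refine tendsto_nhds_unique (hφ.tendsto_at ha) ?_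
    exact tendsto_const_nhds.congr fun n => (koenigsApprox_apply_self hga n).symm
  · refine tendsto_nhds_unique
      ((hloc.deriv (Eventually.of_forall hdiff) isOpen_ball).tendsto_at ha) ?_
    exact tendsto_const_nhds.congr fun n => (hasDerivAt_koenigsApprox hga hgl hl n).deriv.symm
  · intro z hz
    refine tendsto_nhds_unique (hφ.tendsto_at (hmaps hz)) ?_
    exact (((hφ.tendsto_at hz).comp (tendsto_add_atTop_nat 1)).const_mul l).congr
      fun n => (koenigsApprox_comp hl n z).symm

end Koenigs

theorem AnalyticAt.exists_koenigs_linearization {g : ℂ → ℂ} {a : ℂ} (hg : AnalyticAt ℂ g a)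
    (hga : g a = a) (hl0 : deriv g a ≠ 0) (hl1 : ‖deriv g a‖ < 1) :
    ∃ φ : ℂ → ℂ, AnalyticAt ℂ φ a ∧ φ a = 0 ∧ deriv φ a = 1 ∧
      ∀ᶠ z in 𝓝 a, φ (g z) = deriv g a * φ z := by
  set l := deriv g a
  have hl : 0 < ‖l‖ := norm_pos_iff.2 hl0
  -- `‖l‖ < c` makes `g` a `c`-contraction on a small ball, and `c ^ 2 < ‖l‖` makes the
  -- telescoping series of the Koenigs approximations converge.
  obtain ⟨c, hlc, hcl⟩ : ∃ c, ‖l‖ < c ∧ c ^ 2 < ‖l‖ := by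
    obtain ⟨c, hlc, hc⟩ := exists_between ((Real.lt_sqrt hl.le).2 (by nlinarith))
    exact ⟨c, hlc, (Real.lt_sqrt (hl.le.trans hlc.le)).1 hc⟩
  have hc1 : c ≤ 1 := by nlinarith
  obtain ⟨C, hC, hO⟩ := hg.isBigO_sub_sub_deriv_mul_sub_sq.exists_pos
  obtain ⟨ε, hε, hball⟩ := Metric.eventually_nhds_iff_ball.1
    (hO.bound.and (analyticAt_iff_eventually_differentiableAt.1 hg))
  set r := min ε ((c - ‖l‖) / C)
  have hr : 0 < r := lt_min hε (div_pos (by linarith) hC)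
  have hrε : ball a r ⊆ ball a ε := ball_subset_ball (min_le_left _ _)
  have hCr : ‖l‖ + C * r ≤ c := by
    have := mul_le_mul_of_nonneg_left (min_le_right ε ((c - ‖l‖) / C)) hC.le
    rw [mul_div_cancel₀ _ hC.ne'] at this
    linarith
  have he : ∀ z ∈ ball a r, ‖g z - a - l * (z - a)‖ ≤ C * ‖z - a‖ ^ 2 := fun z hz => by
    simpa [hga] using (hball z (hrε hz)).1
  obtain ⟨φ, hφ, hφa, hφ', hφg⟩ := exists_koenigs_on_ball
    (fun z hz => (hball z (hrε hz)).2.differentiableWithinAt) hga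
    hg.differentiableAt.hasDerivAt hr he hC.le hCr hc1 hcl
  exact ⟨φ, hφ.analyticAt (ball_mem_nhds a hr), hφa, hφ',
    Metric.eventually_nhds_iff_ball.2 ⟨r, hr, hφg⟩⟩

theorem HasStrictDerivAt.exists_mem_nhds_injOn {𝕜 : Type*} [NontriviallyNormedField 𝕜]
    [CompleteSpace 𝕜] {f : 𝕜 → 𝕜} {f' a : 𝕜} (hf : HasStrictDerivAt f f' a) (hf' : f' ≠ 0) :
    ∃ s ∈ 𝓝 a, InjOn f s := by
  have hfe := hf.hasStrictFDerivAt_equiv hf'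
  refine ⟨_, (hfe.toOpenPartialHomeomorph f).open_source.mem_nhds
    hfe.mem_toOpenPartialHomeomorph_source, ?_⟩
  simpa [hfe.toOpenPartialHomeomorph_coe] using (hfe.toOpenPartialHomeomorph f).injOn

theorem AnalyticAt.conj_conj {f : ℂ → ℂ} {z : ℂ} (hf : AnalyticAt ℂ f (conj z)) :
    AnalyticAt ℂ (conj ∘ f ∘ conj) z := by
  rw [analyticAt_iff_eventually_differentiableAt] at hf ⊢
  filter_upwards [continuous_conj.continuousAt.eventually hf] with w hw
  simpa using hw.conj_conj

section Antiholomorphic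

variable {f φ : ℂ → ℂ} {a ρ φ' : ℂ}

theorem AnalyticAt.iterate_two_comp_conj (hf : AnalyticAt ℂ f (conj a)) (hfix : f (conj a) = a) :
    AnalyticAt ℂ (fun z => f (conj z))^[2] a := by
  have hGa : (conj ∘ f ∘ conj) a = conj a := by simp [hfix]
  exact (hGa ▸ hf).comp hf.conj_conj

theorem HasDerivAt.iterate_two_comp_conj (hf : HasDerivAt f ρ (conj a)) (hfix : f (conj a) = a) :
    HasDerivAt (fun z => f (conj z))^[2] (ρ * conj ρ) a := by
  have hGa : (conj ∘ f ∘ conj) a = conj a := by simp [hfix]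
  exact (hGa ▸ hf).comp a (by simpa using hf)

noncomputable def twistedAverage (F φ : ℂ → ℂ) (ρ z : ℂ) : ℂ :=
  ρ * conj ρ * φ z + ρ * conj (φ (F z))

theorem twistedAverage_apply_eq {F : ℂ → ℂ} {z : ℂ} (h : φ (F (F z)) = ρ * conj ρ * φ z) :
    twistedAverage F φ ρ (F z) = ρ * conj (twistedAverage F φ ρ z) := by
  simp only [twistedAverage, h, map_add, map_mul, conj_conj]
  ring

theorem AnalyticAt.twistedAverage_comp_conj (hφ : AnalyticAt ℂ φ a)
    (hf : AnalyticAt ℂ f (conj a)) (hfix : f (conj a) = a) :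
    AnalyticAt ℂ (twistedAverage (fun z => f (conj z)) φ ρ) a :=
  (analyticAt_const.mul hφ).add
    (analyticAt_const.mul (AnalyticAt.conj_conj (f := φ ∘ f) ((hfix ▸ hφ).comp hf)))

theorem HasDerivAt.twistedAverage_comp_conj (hφ : HasDerivAt φ φ' a)
    (hf : HasDerivAt f ρ (conj a)) (hfix : f (conj a) = a) :
    HasDerivAt (twistedAverage (fun z => f (conj z)) φ ρ) (ρ * conj ρ * (φ' + conj φ')) a := by
  have hφf : HasDerivAt (conj ∘ (φ ∘ f) ∘ conj) (conj φ' * conj ρ) a := by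
    simpa using (hfix ▸ hφ).comp (conj a) hf
  exact ((hφ.const_mul _).add (hφf.const_mul ρ)).congr_deriv (by ring)

end Antiholomorphic

theorem stmt_3_general (U : Set ℂ) (hU : IsOpen U) (a : ℂ) (ha : a ∈ U)
    (f : ℂ → ℂ) (hf : DifferentiableOn ℂ f ((starRingEnd ℂ) '' U))
    (hfix : f ((starRingEnd ℂ) a) = a)
    (ρ : ℂ) (hρ : ρ = deriv f ((starRingEnd ℂ) a))
    (hρ0 : 0 < ‖ρ‖) (hρ1 : ‖ρ‖ < 1) :
    ∃ (V : Set ℂ) (K : ℂ → ℂ), IsOpen V ∧ a ∈ V ∧ V ⊆ U ∧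
      DifferentiableOn ℂ K V ∧ Set.InjOn K V ∧ K a = 0 ∧
      ∀ z ∈ V, K (f ((starRingEnd ℂ) z)) = ρ * (starRingEnd ℂ) (K z) := by
  have hfa : AnalyticAt ℂ f (conj a) := by
    refine hf.analyticAt (IsOpen.mem_nhds ?_ (mem_image_of_mem _ ha))
    rw [Function.Involutive.image_eq_preimage_symm conj_conj]
    exact hU.preimage continuous_conj
  have hf' : HasDerivAt f ρ (conj a) := hρ ▸ hfa.differentiableAt.hasDerivAt
  have hl0 : ρ * conj ρ ≠ 0 := mul_ne_zero (norm_pos_iff.1 hρ0) (by simpa using hρ0)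
  have hl := (hf'.iterate_two_comp_conj hfix).deriv
  obtain ⟨φ, hφ, hφa, hφ', hφF⟩ := (hfa.iterate_two_comp_conj hfix).exists_koenigs_linearization
    (by simp [hfix]) (by rwa [hl]) (by rw [hl, norm_mul, norm_conj]; nlinarith)
  rw [hl] at hφF
  set K := twistedAverage (fun z => f (conj z)) φ ρ
  have hKan : AnalyticAt ℂ K a := hφ.twistedAverage_comp_conj hfa hfix
  have hK' : deriv K a ≠ 0 := by
    have hK := (hφ' ▸ hφ.differentiableAt.hasDerivAt).twistedAverage_comp_conj hf' hfix
    rw [hK.deriv, map_one, one_add_one_eq_two]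
    exact mul_ne_zero hl0 two_ne_zero
  obtain ⟨s, hs, hKs⟩ := hKan.hasStrictDerivAt.exists_mem_nhds_injOn hK'
  obtain ⟨V, hV, hVo, haV⟩ := _root_.eventually_nhds_iff.1 <|
    Eventually.and (hU.mem_nhds ha) <|
      (analyticAt_iff_eventually_differentiableAt.1 hKan).and (Eventually.and hs hφF)
  exact ⟨V, K, hVo, haV, fun z hz => (hV z hz).1,
    fun z hz => (hV z hz).2.1.differentiableWithinAt, hKs.mono fun z hz => (hV z hz).2.2.1,
    by simp [K, twistedAverage, hφa, hfix], fun z hz => twistedAverage_apply_eq (hV z hz).2.2.2⟩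

/-- Linearization of an antiholomorphic germ with attracting fixed point: if `f` is
holomorphic and injective on `U* = conj '' U` with `f (U*) ⊆ U`, the antiholomorphic
map `f* z = f (conj z)` fixes `a ∈ U`, and `ρ = f' (conj a)` satisfies `0 < |ρ| < 1`,
then there is a holomorphic injective coordinate `K` near `a` with `K a = 0`
conjugating `f*` to `w ↦ ρ · conj w`. -/
theorem stmt_3 (U : Set ℂ) (hU : IsOpen U) (a : ℂ) (ha : a ∈ U)
    (f : ℂ → ℂ) (hf : DifferentiableOn ℂ f ((starRingEnd ℂ) '' U))
    (hinj : Set.InjOn f ((starRingEnd ℂ) '' U))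
    (hmaps : Set.MapsTo f ((starRingEnd ℂ) '' U) U)
    (hfix : f ((starRingEnd ℂ) a) = a)
    (ρ : ℂ) (hρ : ρ = deriv f ((starRingEnd ℂ) a))
    (hρ0 : 0 < ‖ρ‖) (hρ1 : ‖ρ‖ < 1) :
    ∃ (V : Set ℂ) (K : ℂ → ℂ), IsOpen V ∧ a ∈ V ∧ V ⊆ U ∧
      DifferentiableOn ℂ K V ∧ Set.InjOn K V ∧ K a = 0 ∧
      ∀ z ∈ V, K (f ((starRingEnd ℂ) z)) = ρ * (starRingEnd ℂ) (K z) :=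
  stmt_3_general U hU a ha f hf hfix ρ hρ hρ0 hρ1
end

section
/- Let σ : [0,1] → ℂ be a rectifiable curve (of finite length ℓ) with σ(0) = c·a and σ(1) = a for some a ∈ ℂ \ {0} and real 0 < c < 1. Define Γ = ⋃_{n≥0} cⁿ · σ([0,1]), where cⁿ·σ([0,1]) is the image of σ scaled by cⁿ. Then Γ ∪ {0} is a connected compact set containing 0 and a, which is the image of a rectifiable curve from 0 to a of length at most ℓ/(1-c). -/
/-!
The copy `cⁿ • σ` is run on the dyadic parameter interval `[2⁻ⁿ⁻¹, 2⁻ⁿ]` and `0` is sent to `0`.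
Consecutive copies meet because `σ 0 = c • σ 1`, and the copies shrink to `0`, which gives
continuity at `0`. On `[2⁻ⁿ, 1]` the variation is at most `∑_{k<n} ‖c‖ᵏ ℓ`; since the curve is
continuous at `0`, the variation on `[0, 1]` is the supremum of the variations on the intervals
`[t, 1]`, `0 < t`, hence at most `ℓ / (1 - ‖c‖)`.
-/

open Set Topology

lemma eVariationOn_Icc_le_of_forall_Icc_le {α E : Type*} [LinearOrder α] [TopologicalSpace α]
    [OrderTopology α] [DenselyOrdered α] [PseudoEMetricSpace E] {f : α → E} {a b : α}
    {C : ENNReal} (hf : ContinuousWithinAt f (Icc a b) a)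
    (hC : ∀ t ∈ Ioc a b, eVariationOn f (Icc t b) ≤ C) :
    eVariationOn f (Icc a b) ≤ C := by
  rcases le_or_gt b a with hba | hab
  · rw [eVariationOn.subsingleton f (subsingleton_Icc_of_ge hba)]
    exact zero_le
  rw [← eVariationOn.eVariationOn_Ioc_eq_Icc_of_continuousWithinAt
    (hf.mono_of_mem_nhdsWithin (Icc_mem_nhdsGE hab))]
  by_contra! hlt
  obtain ⟨s, hs, t, ht, -, hst⟩ := eVariationOn.exists_lt_eVariationOn_inter_Icc hlt
  have hsub : Ioc a b ∩ Icc s t ⊆ Icc s b := inter_subset_right.trans (Icc_subset_Icc_right ht.2)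
  exact (hst.trans_le (eVariationOn.mono f hsub)).not_ge (hC s hs)

noncomputable def dyadicIndex (t : ℝ) : ℕ := (Int.log 2 t⁻¹).toNat

lemma dyadicIndex_eq {n : ℕ} {t : ℝ} (ht : t ∈ Ioc ((2:ℝ)⁻¹ ^ (n + 1)) ((2:ℝ)⁻¹ ^ n)) :
    dyadicIndex t = n := by
  have ht0 : 0 < t := lt_trans (by positivity) ht.1
  suffices Int.log 2 t⁻¹ = n by simp [dyadicIndex, this]
  apply le_antisymm
  · rw [← Int.lt_add_one_iff, ← Int.lt_zpow_iff_log_lt one_lt_two (inv_pos.2 ht0),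
      ← Nat.cast_succ, zpow_natCast, Nat.cast_ofNat, inv_lt_comm₀ ht0 (by positivity), ← inv_pow]
    exact ht.1
  · rw [← Int.zpow_le_iff_le_log one_lt_two (inv_pos.2 ht0), zpow_natCast, Nat.cast_ofNat,
      le_inv_comm₀ (by positivity) ht0, ← inv_pow]
    exact ht.2

lemma exists_mem_Ioc_inv_two_pow {t : ℝ} (ht : t ∈ Ioc 0 1) :
    ∃ n : ℕ, t ∈ Ioc ((2:ℝ)⁻¹ ^ (n + 1)) ((2:ℝ)⁻¹ ^ n) :=
  exists_nat_pow_near_of_lt_one ht.1 ht.2 (by norm_num) (by norm_num)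

lemma mem_Ioc_dyadicIndex {t : ℝ} (ht : t ∈ Ioc 0 1) :
    t ∈ Ioc ((2:ℝ)⁻¹ ^ (dyadicIndex t + 1)) ((2:ℝ)⁻¹ ^ dyadicIndex t) := by
  obtain ⟨n, hn⟩ := exists_mem_Ioc_inv_two_pow ht
  rwa [dyadicIndex_eq hn]

lemma Icc_zero_one_eq_iUnion_Icc_inv_two_pow :
    Icc (0:ℝ) 1 = (⋃ n : ℕ, Icc ((2:ℝ)⁻¹ ^ (n + 1)) ((2:ℝ)⁻¹ ^ n)) ∪ {0} := by
  refine Subset.antisymm (fun t ht => ?_) (union_subset (iUnion_subset fun n => ?_) ?_)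
  · rcases ht.1.eq_or_lt with rfl | ht0
    · exact Or.inr rfl
    · obtain ⟨n, hn⟩ := exists_mem_Ioc_inv_two_pow ⟨ht0, ht.2⟩
      exact Or.inl (mem_iUnion.2 ⟨n, Ioc_subset_Icc_self hn⟩)
  · exact Icc_subset_Icc (by positivity) (pow_le_one₀ (by norm_num) (by norm_num))
  · simp

lemma image_affine_Icc_inv_two_pow (n : ℕ) :
    (fun t : ℝ => 2 ^ (n + 1) * t - 1) '' Icc ((2:ℝ)⁻¹ ^ (n + 1)) ((2:ℝ)⁻¹ ^ n) = Icc 0 1 := by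
  simp only [sub_eq_add_neg]
  rw [image_affine_Icc' (by positivity)]
  congr 1
  · rw [← mul_pow]; norm_num
  · rw [pow_succ, mul_right_comm, ← mul_pow]; norm_num


section ConcatScaledCopies

variable {E : Type*} [NormedAddCommGroup E] [NormedSpace ℝ E] {σ : ℝ → E} {c : ℝ}

noncomputable def concatScaledCopies (c : ℝ) (σ : ℝ → E) (t : ℝ) : E :=
  if t ≤ 0 then 0 else c ^ dyadicIndex t • σ (2 ^ (dyadicIndex t + 1) * t - 1)

@[simp] lemma concatScaledCopies_zero : concatScaledCopies c σ 0 = 0 := if_pos le_rfl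

lemma concatScaledCopies_eqOn (h01 : σ 0 = c • σ 1) (n : ℕ) :
    EqOn (concatScaledCopies c σ) (fun t => c ^ n • σ (2 ^ (n + 1) * t - 1))
      (Icc ((2:ℝ)⁻¹ ^ (n + 1)) ((2:ℝ)⁻¹ ^ n)) := by
  intro t ht
  have ht0 : 0 < t := lt_of_lt_of_le (by positivity) ht.1
  rcases ht.1.eq_or_lt with rfl | hlt
  · have hidx : dyadicIndex ((2:ℝ)⁻¹ ^ (n + 1)) = n + 1 :=
      dyadicIndex_eq ⟨pow_lt_pow_right_of_lt_one₀ (by norm_num) (by norm_num) (by omega), le_rfl⟩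
    have hright : (2:ℝ) ^ (n + 1 + 1) * 2⁻¹ ^ (n + 1) - 1 = 1 := by
      rw [pow_succ _ (n + 1), mul_right_comm, ← mul_pow]; norm_num
    have hleft : (2:ℝ) ^ (n + 1) * 2⁻¹ ^ (n + 1) - 1 = 0 := by
      rw [← mul_pow]; norm_num
    beta_reduce
    rw [concatScaledCopies, if_neg ht0.not_ge, hidx, hright, hleft, h01, pow_succ, mul_smul]
  · rw [concatScaledCopies, if_neg ht0.not_ge, dyadicIndex_eq ⟨hlt, ht.2⟩]

lemma concatScaledCopies_one (h01 : σ 0 = c • σ 1) : concatScaledCopies c σ 1 = σ 1 := by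
  rw [concatScaledCopies_eqOn h01 0 (by norm_num)]
  norm_num

lemma image_concatScaledCopies_Icc_inv_two_pow (h01 : σ 0 = c • σ 1) (n : ℕ) :
    concatScaledCopies c σ '' Icc ((2:ℝ)⁻¹ ^ (n + 1)) ((2:ℝ)⁻¹ ^ n) =
      (c ^ n • ·) '' (σ '' Icc 0 1) := by
  rw [(concatScaledCopies_eqOn h01 n).image_eq, ← image_affine_Icc_inv_two_pow n, image_image,
    image_image]

lemma image_concatScaledCopies (h01 : σ 0 = c • σ 1) :
    concatScaledCopies c σ '' Icc 0 1 = (⋃ n : ℕ, (c ^ n • ·) '' (σ '' Icc 0 1)) ∪ {0} := by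
  simp only [Icc_zero_one_eq_iUnion_Icc_inv_two_pow, image_union, image_iUnion,
    image_concatScaledCopies_Icc_inv_two_pow h01, image_singleton, concatScaledCopies_zero]

lemma continuousOn_concatScaledCopies_Icc_inv_two_pow (hσ : ContinuousOn σ (Icc 0 1))
    (h01 : σ 0 = c • σ 1) (n : ℕ) :
    ContinuousOn (concatScaledCopies c σ) (Icc ((2:ℝ)⁻¹ ^ (n + 1)) ((2:ℝ)⁻¹ ^ n)) := by
  refine ContinuousOn.congr ?_ (concatScaledCopies_eqOn h01 n)
  refine continuousOn_const.smul (hσ.comp (by fun_prop) ?_)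
  rw [← image_affine_Icc_inv_two_pow n]
  exact mapsTo_image _ _

lemma continuousOn_concatScaledCopies_Icc_inv_two_pow_one (hσ : ContinuousOn σ (Icc 0 1))
    (h01 : σ 0 = c • σ 1) (n : ℕ) :
    ContinuousOn (concatScaledCopies c σ) (Icc ((2:ℝ)⁻¹ ^ n) 1) := by
  induction n with
  | zero => simp [continuousOn_singleton]
  | succ n ih =>
    rw [← Icc_union_Icc_eq_Icc (pow_le_pow_of_le_one (by norm_num) (by norm_num) n.le_succ)
      (pow_le_one₀ (by norm_num) (by norm_num))]
    exact (continuousOn_concatScaledCopies_Icc_inv_two_pow hσ h01 n).union_of_isClosed ih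
      isClosed_Icc isClosed_Icc

lemma norm_concatScaledCopies_le {M : ℝ} (hM : ∀ s ∈ Icc (0:ℝ) 1, ‖σ s‖ ≤ M) (hc : ‖c‖ ≤ 1)
    {N : ℕ} {t : ℝ} (ht : t ∈ Icc 0 ((2:ℝ)⁻¹ ^ N)) : ‖concatScaledCopies c σ t‖ ≤ ‖c‖ ^ N * M := by
  have hM0 : 0 ≤ M := (norm_nonneg _).trans (hM 0 (by norm_num))
  rcases ht.1.eq_or_lt with rfl | ht0
  · simpa using mul_nonneg (pow_nonneg (norm_nonneg c) N) hM0
  have ht1 : t ≤ 1 := ht.2.trans (pow_le_one₀ (by norm_num) (by norm_num))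
  obtain ⟨hlo, hhi⟩ := mem_Ioc_dyadicIndex ⟨ht0, ht1⟩
  have hN : N ≤ dyadicIndex t := Nat.lt_succ_iff.1 <|
    (pow_lt_pow_iff_right_of_lt_one₀ (by norm_num) (by norm_num)).1 (hlo.trans_le ht.2)
  have hmem : 2 ^ (dyadicIndex t + 1) * t - 1 ∈ Icc (0:ℝ) 1 := by
    rw [← image_affine_Icc_inv_two_pow (dyadicIndex t)]
    exact mem_image_of_mem _ ⟨hlo.le, hhi⟩
  rw [concatScaledCopies, if_neg ht0.not_ge, norm_smul, norm_pow]
  exact mul_le_mul (pow_le_pow_of_le_one (norm_nonneg c) hc hN) (hM _ hmem) (norm_nonneg _)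
    (pow_nonneg (norm_nonneg c) N)

lemma continuousWithinAt_concatScaledCopies_zero (hσ : ContinuousOn σ (Icc 0 1)) (hc : ‖c‖ < 1) :
    ContinuousWithinAt (concatScaledCopies c σ) (Icc 0 1) 0 := by
  obtain ⟨M, hM⟩ := isCompact_Icc.exists_bound_of_continuousOn hσ
  have hM0 : 0 ≤ M := (norm_nonneg _).trans (hM 0 (by norm_num))
  rw [ContinuousWithinAt, concatScaledCopies_zero, Metric.tendsto_nhds]
  intro ε hε
  obtain ⟨N, hN⟩ := exists_pow_lt_of_lt_one (div_pos hε (by linarith : 0 < M + 1)) hc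
  rw [lt_div_iff₀ (by linarith)] at hN
  have hnhds : Iio ((2:ℝ)⁻¹ ^ N) ∈ 𝓝[Icc 0 1] 0 :=
    mem_nhdsWithin_of_mem_nhds (Iio_mem_nhds (by positivity))
  filter_upwards [hnhds, self_mem_nhdsWithin] with t htN ht
  rw [dist_zero_right]
  calc ‖concatScaledCopies c σ t‖ ≤ ‖c‖ ^ N * M :=
        norm_concatScaledCopies_le hM hc.le ⟨ht.1, htN.le⟩
    _ ≤ ‖c‖ ^ N * (M + 1) := by gcongr; linarith
    _ < ε := hN

lemma continuousOn_concatScaledCopies (hσ : ContinuousOn σ (Icc 0 1)) (h01 : σ 0 = c • σ 1)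
    (hc : ‖c‖ < 1) : ContinuousOn (concatScaledCopies c σ) (Icc 0 1) := by
  intro t ht
  rcases ht.1.eq_or_lt with rfl | ht0
  · exact continuousWithinAt_concatScaledCopies_zero hσ hc
  obtain ⟨n, hn⟩ := exists_pow_lt_of_lt_one ht0 (by norm_num : (2:ℝ)⁻¹ < 1)
  refine (continuousOn_concatScaledCopies_Icc_inv_two_pow_one hσ h01 n t ⟨hn.le, ht.2⟩)
    |>.mono_of_mem_nhdsWithin ?_
  exact mem_nhdsWithin.2 ⟨Ioi _, isOpen_Ioi, hn, fun s hs => ⟨hs.1.le, hs.2.2⟩⟩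

lemma eVariationOn_const_smul_le {α : Type*} [LinearOrder α] (r : ℝ) (f : α → E) (s : Set α) :
    eVariationOn (fun x => r • f x) s ≤ ‖r‖ₑ * eVariationOn f s :=
  (lipschitzWith_smul r).lipschitzOnWith.comp_eVariationOn_le (mapsTo_univ f s)

lemma eVariationOn_concatScaledCopies_Icc_inv_two_pow (h01 : σ 0 = c • σ 1) (n : ℕ) :
    eVariationOn (concatScaledCopies c σ) (Icc ((2:ℝ)⁻¹ ^ (n + 1)) ((2:ℝ)⁻¹ ^ n)) ≤
      ‖c‖ₑ ^ n * eVariationOn σ (Icc 0 1) := by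
  have hmono : MonotoneOn (fun t : ℝ => 2 ^ (n + 1) * t - 1)
      (Icc ((2:ℝ)⁻¹ ^ (n + 1)) ((2:ℝ)⁻¹ ^ n)) :=
    fun x _ y _ hxy => by simp only; gcongr
  rw [eVariationOn.congr (concatScaledCopies_eqOn h01 n), ← enorm_pow, ← image_affine_Icc_inv_two_pow n,
    ← eVariationOn.comp_eq_of_monotoneOn σ _ hmono]
  exact eVariationOn_const_smul_le _ (σ ∘ fun t => 2 ^ (n + 1) * t - 1) _

lemma eVariationOn_concatScaledCopies_Icc_inv_two_pow_one_le (h01 : σ 0 = c • σ 1) (n : ℕ) :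
    eVariationOn (concatScaledCopies c σ) (Icc ((2:ℝ)⁻¹ ^ n) 1) ≤
      (∑ k ∈ Finset.range n, ‖c‖ₑ ^ k) * eVariationOn σ (Icc 0 1) := by
  induction n with
  | zero => simp [eVariationOn.subsingleton]
  | succ n ih =>
    have h := eVariationOn.Icc_add_Icc (concatScaledCopies c σ) (s := univ)
      (a := (2:ℝ)⁻¹ ^ (n + 1)) (b := (2:ℝ)⁻¹ ^ n) (c := 1)
      (pow_le_pow_of_le_one (by norm_num) (by norm_num) n.le_succ)
      (pow_le_one₀ (by norm_num) (by norm_num)) (mem_univ _)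
    simp only [univ_inter] at h
    rw [← h, Finset.sum_range_succ, add_mul]
    exact (add_le_add (eVariationOn_concatScaledCopies_Icc_inv_two_pow h01 n) ih).trans_eq
      (add_comm _ _)

lemma eVariationOn_concatScaledCopies_le (hσ : ContinuousOn σ (Icc 0 1)) (h01 : σ 0 = c • σ 1)
    (hc : ‖c‖ < 1) :
    eVariationOn (concatScaledCopies c σ) (Icc 0 1) ≤ eVariationOn σ (Icc 0 1) / (1 - ‖c‖ₑ) := by
  refine eVariationOn_Icc_le_of_forall_Icc_le (continuousWithinAt_concatScaledCopies_zero hσ hc)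
    fun t ht => ?_
  obtain ⟨n, hn⟩ := exists_pow_lt_of_lt_one ht.1 (by norm_num : (2:ℝ)⁻¹ < 1)
  calc eVariationOn (concatScaledCopies c σ) (Icc t 1)
      ≤ eVariationOn (concatScaledCopies c σ) (Icc ((2:ℝ)⁻¹ ^ n) 1) :=
        eVariationOn.mono _ (Icc_subset_Icc_left hn.le)
    _ ≤ (∑ k ∈ Finset.range n, ‖c‖ₑ ^ k) * eVariationOn σ (Icc 0 1) :=
        eVariationOn_concatScaledCopies_Icc_inv_two_pow_one_le h01 n
    _ ≤ (∑' k, ‖c‖ₑ ^ k) * eVariationOn σ (Icc 0 1) := by gcongr; exact ENNReal.sum_le_tsum _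
    _ = eVariationOn σ (Icc 0 1) / (1 - ‖c‖ₑ) := by
        rw [ENNReal.tsum_geometric, ENNReal.div_eq_inv_mul]

end ConcatScaledCopies

theorem stmt_10_general (σ : ℝ → ℂ) (hcont : ContinuousOn σ (Set.Icc 0 1))
    (ℓ : ℝ) (hlen : eVariationOn σ (Set.Icc 0 1) = ENNReal.ofReal ℓ)
    (a : ℂ) (c : ℝ) (hc0 : 0 < c) (hc1 : c < 1)
    (h0 : σ 0 = (c : ℂ) * a) (h1 : σ 1 = a) :
    IsCompact ((⋃ n : ℕ, (fun z => (c : ℂ) ^ n * z) '' (σ '' Set.Icc 0 1)) ∪ {0}) ∧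
    IsConnected ((⋃ n : ℕ, (fun z => (c : ℂ) ^ n * z) '' (σ '' Set.Icc 0 1)) ∪ {0}) ∧
    (0 : ℂ) ∈ (⋃ n : ℕ, (fun z => (c : ℂ) ^ n * z) '' (σ '' Set.Icc 0 1)) ∪ {0} ∧
    a ∈ (⋃ n : ℕ, (fun z => (c : ℂ) ^ n * z) '' (σ '' Set.Icc 0 1)) ∪ {0} ∧
    ∃ τ : ℝ → ℂ, ContinuousOn τ (Set.Icc 0 1) ∧ τ 0 = 0 ∧ τ 1 = a ∧
      τ '' Set.Icc 0 1 = (⋃ n : ℕ, (fun z => (c : ℂ) ^ n * z) '' (σ '' Set.Icc 0 1)) ∪ {0} ∧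
      eVariationOn τ (Set.Icc 0 1) ≤ ENNReal.ofReal (ℓ / (1 - c)) := by
  have h01 : σ 0 = c • σ 1 := by rw [h0, h1, Complex.real_smul]
  have hc : ‖c‖ < 1 := by rwa [Real.norm_of_nonneg hc0.le]
  have hscale (n : ℕ) : (fun z : ℂ => (c : ℂ) ^ n * z) = (c ^ n • ·) := by
    ext z
    rw [Complex.real_smul, Complex.ofReal_pow]
  simp only [hscale, ← image_concatScaledCopies h01]
  have hτ := continuousOn_concatScaledCopies hcont h01 hc
  have hτ1 : concatScaledCopies c σ 1 = a := (concatScaledCopies_one h01).trans h1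
  refine ⟨isCompact_Icc.image_of_continuousOn hτ, (isConnected_Icc zero_le_one).image _ hτ,
    ⟨0, left_mem_Icc.2 zero_le_one, concatScaledCopies_zero⟩,
    ⟨1, right_mem_Icc.2 zero_le_one, hτ1⟩, _, hτ, concatScaledCopies_zero, hτ1, rfl, ?_⟩
  calc eVariationOn (concatScaledCopies c σ) (Icc 0 1)
      ≤ eVariationOn σ (Icc 0 1) / (1 - ‖c‖ₑ) := eVariationOn_concatScaledCopies_le hcont h01 hc
    _ = ENNReal.ofReal (ℓ / (1 - c)) := by
      rw [hlen, Real.enorm_of_nonneg hc0.le, ← ENNReal.ofReal_one, ← ENNReal.ofReal_sub _ hc0.le,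
        ENNReal.ofReal_div_of_pos (by linarith)]

/-- Concatenating the rescaled copies `cⁿ·σ` of a rectifiable curve `σ` from `c·a` to `a`
yields a compact connected set `Γ ∪ {0}` containing `0` and `a`, which is the image of a
rectifiable curve from `0` to `a` of length at most `ℓ/(1-c)`. -/
theorem stmt_10 (σ : ℝ → ℂ) (hcont : ContinuousOn σ (Set.Icc 0 1))
    (ℓ : ℝ) (hℓ0 : 0 ≤ ℓ) (hlen : eVariationOn σ (Set.Icc 0 1) = ENNReal.ofReal ℓ)
    (a : ℂ) (ha : a ≠ 0) (c : ℝ) (hc0 : 0 < c) (hc1 : c < 1)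
    (h0 : σ 0 = (c : ℂ) * a) (h1 : σ 1 = a) :
    IsCompact ((⋃ n : ℕ, (fun z => (c : ℂ) ^ n * z) '' (σ '' Set.Icc 0 1)) ∪ {0}) ∧
    IsConnected ((⋃ n : ℕ, (fun z => (c : ℂ) ^ n * z) '' (σ '' Set.Icc 0 1)) ∪ {0}) ∧
    (0 : ℂ) ∈ (⋃ n : ℕ, (fun z => (c : ℂ) ^ n * z) '' (σ '' Set.Icc 0 1)) ∪ {0} ∧
    a ∈ (⋃ n : ℕ, (fun z => (c : ℂ) ^ n * z) '' (σ '' Set.Icc 0 1)) ∪ {0} ∧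
    ∃ τ : ℝ → ℂ, ContinuousOn τ (Set.Icc 0 1) ∧ τ 0 = 0 ∧ τ 1 = a ∧
      τ '' Set.Icc 0 1 = (⋃ n : ℕ, (fun z => (c : ℂ) ^ n * z) '' (σ '' Set.Icc 0 1)) ∪ {0} ∧
      eVariationOn τ (Set.Icc 0 1) ≤ ENNReal.ofReal (ℓ / (1 - c)) :=
  stmt_10_general σ hcont ℓ hlen a c hc0 hc1 h0 h1
end
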